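/- Let g : ℝ × ℝ → ℝ be continuously differentiable with g(x, y) > 0 everywhere, let δ > 1, and suppose there are constants M, M' > 0 with g(x, 1) ≤ M and |∂g/∂y(x, 1)| ≤ M' for all x ∈ ℝ. For ε₁ ∈ (0, 1] define F₂(x, y) = 1 + ((y − 1) + ε₁·g(x, y))^δ. Then for every x the partial derivative of F₂ with respect to y at the point (x, 1) satisfies |∂F₂/∂y(x, 1)| ≤ δ·M^(δ−1)·(1 + M')·ε₁^(δ−1), and this bound tends to 0 as ε₁ → 0⁺. -/

import Mathlib

open Filter

/-- Since `1 ≤ δ`, the chain rule for `u ↦ u ^ δ` applies even where the base vanishes. -/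
theorem hasDerivAt_one_add_rpow_sub_add_mul {G : ℝ → ℝ} {G' a ε δ : ℝ}
    (hG : HasDerivAt G G' a) (hδ : 1 ≤ δ) :
    HasDerivAt (fun y => 1 + ((y - a) + ε * G y) ^ δ)
      ((1 + ε * G') * δ * (ε * G a) ^ (δ - 1)) a := by
  have hbase : HasDerivAt (fun y => (y - a) + ε * G y) (1 + ε * G') a :=
    ((hasDerivAt_id a).sub_const a).add (hG.const_mul ε)
  simpa using (hbase.rpow_const (Or.inr hδ)).const_add 1

theorem abs_one_add_mul_le {ε G' M' : ℝ} (hε₀ : 0 ≤ ε) (hε₁ : ε ≤ 1) (hG' : |G'| ≤ M') :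
    |1 + ε * G'| ≤ 1 + M' :=
  calc |1 + ε * G'| ≤ 1 + ε * |G'| := by
        simpa [abs_mul, abs_of_nonneg hε₀] using abs_add_le 1 (ε * G')
    _ ≤ 1 + M' := by nlinarith [abs_nonneg G']

theorem abs_mul_mul_rpow_le {ε b G' δ M M' : ℝ} (hε₀ : 0 ≤ ε) (hε₁ : ε ≤ 1)
    (hb₀ : 0 ≤ b) (hbM : b ≤ M) (hG' : |G'| ≤ M') (hδ : 1 ≤ δ) :
    |(1 + ε * G') * δ * (ε * b) ^ (δ - 1)| ≤ δ * M ^ (δ - 1) * (1 + M') * ε ^ (δ - 1) := by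
  have hpow : (ε * b) ^ (δ - 1) ≤ ε ^ (δ - 1) * M ^ (δ - 1) := by
    rw [Real.mul_rpow hε₀ hb₀]
    gcongr
  rw [abs_mul, abs_mul, abs_of_nonneg (by linarith : (0 : ℝ) ≤ δ),
    abs_of_nonneg (Real.rpow_nonneg (mul_nonneg hε₀ hb₀) _)]
  calc |1 + ε * G'| * δ * (ε * b) ^ (δ - 1)
      ≤ (1 + M') * δ * (ε ^ (δ - 1) * M ^ (δ - 1)) := by
        gcongr
        · exact mul_nonneg (by linarith [abs_nonneg G']) (by linarith)
        · exact abs_one_add_mul_le hε₀ hε₁ hG'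
    _ = δ * M ^ (δ - 1) * (1 + M') * ε ^ (δ - 1) := by ring

theorem stmt_2_general (g : ℝ × ℝ → ℝ) (hg : ContDiff ℝ 1 g) (hgpos : ∀ p, 0 < g p)
    (δ : ℝ) (hδ : 1 < δ) (M M' : ℝ)
    (hbound : ∀ x : ℝ, g (x, 1) ≤ M)
    (hbound' : ∀ x : ℝ, |deriv (fun y => g (x, y)) 1| ≤ M')
    (ε₁ : ℝ) (hε₁ : ε₁ ∈ Set.Ioc (0 : ℝ) 1) :
    (∀ x : ℝ,
      |deriv (fun y => 1 + ((y - 1) + ε₁ * g (x, y)) ^ δ) 1|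
        ≤ δ * M ^ (δ - 1) * (1 + M') * ε₁ ^ (δ - 1)) ∧
    Tendsto (fun e : ℝ => δ * M ^ (δ - 1) * (1 + M') * e ^ (δ - 1))
      (nhdsWithin 0 (Set.Ioi 0)) (nhds 0) := by
  refine ⟨fun x => ?_, ?_⟩
  · have hslice : DifferentiableAt ℝ (fun y => g (x, y)) 1 :=
      (hg.differentiable one_ne_zero).differentiableAt.comp 1
        ((differentiableAt_const x).prodMk differentiableAt_id)
    rw [(hasDerivAt_one_add_rpow_sub_add_mul hslice.hasDerivAt hδ.le).deriv]
    exact abs_mul_mul_rpow_le hε₁.1.le hε₁.2 (hgpos _).le (hbound x) (hbound' x) hδ.le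
  · simpa using ((tendsto_nhdsWithin_of_tendsto_nhds tendsto_id).rpow_const_nhds_zero
      (sub_pos.mpr hδ)).const_mul (δ * M ^ (δ - 1) * (1 + M'))

/-- Let `g : ℝ × ℝ → ℝ` be `C¹` and positive, `δ > 1`, and suppose
`g(x,1) ≤ M` and `|∂g/∂y (x,1)| ≤ M'` for all `x`, with `M, M' > 0`. For
`ε₁ ∈ (0,1]` define `F₂(x,y) = 1 + ((y − 1) + ε₁·g(x,y))^δ`. Then
`|∂F₂/∂y (x,1)| ≤ δ·M^(δ−1)·(1+M')·ε₁^(δ−1)` for all `x`, and this bound tends to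
`0` as `ε₁ → 0⁺`. -/
theorem stmt_2 (g : ℝ × ℝ → ℝ) (hg : ContDiff ℝ 1 g) (hgpos : ∀ p, 0 < g p)
    (δ : ℝ) (hδ : 1 < δ) (M M' : ℝ) (hM : 0 < M) (hM' : 0 < M')
    (hbound : ∀ x : ℝ, g (x, 1) ≤ M)
    (hbound' : ∀ x : ℝ, |deriv (fun y => g (x, y)) 1| ≤ M')
    (ε₁ : ℝ) (hε₁ : ε₁ ∈ Set.Ioc (0 : ℝ) 1) :
    (∀ x : ℝ,
      |deriv (fun y => 1 + ((y - 1) + ε₁ * g (x, y)) ^ δ) 1|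
        ≤ δ * M ^ (δ - 1) * (1 + M') * ε₁ ^ (δ - 1)) ∧
    Tendsto (fun e : ℝ => δ * M ^ (δ - 1) * (1 + M') * e ^ (δ - 1))
      (nhdsWithin 0 (Set.Ioi 0)) (nhds 0) :=
  stmt_2_general g hg hgpos δ hδ M M' hbound hbound' ε₁ hε₁
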